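/- Let G be a strong digraph on a finite vertex type V with diameter at most 2, i.e., dist(u,v) ≤ 2 for all vertices u, v. Suppose there exist pairwise distinct vertices u, v, w, z such that (u,v), (u,z) and (w,v) are arcs of G, while (w,z) is not an arc of G. Then the second distance ideal I_2(G) is the unit ideal of ℤ[x_v : v ∈ V]. -/
import Mathlib


open MvPolynomial

/-- The ideal generated by the determinants of all `k × k` submatrices of a square
matrix `M` (choices of `k` rows and `k` columns). -/
def minorsIdeal {R : Type*} [CommRing R] {m : Type*} (M : Matrix m m R) (k : ℕ) : Ideal R :=
  Ideal.span { p | ∃ (r c : Fin k → m), Function.Injective r ∧ Function.Injective c ∧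
    p = (M.submatrix r c).det }

/-- A directed walk of length `k` from `u` to `v` in the digraph with arc relation `A`. -/
def IsWalk {V : Type*} (A : V → V → Prop) (k : ℕ) (u v : V) : Prop :=
  ∃ f : Fin (k + 1) → V, f 0 = u ∧ f (Fin.last k) = v ∧
    ∀ i : Fin k, A (f i.castSucc) (f i.succ)

/-- The distance from `u` to `v`: the minimum length of a directed walk from `u` to `v`. -/
noncomputable def ddist {V : Type*} (A : V → V → Prop) (u v : V) : ℕ :=
  sInf {k | IsWalk A k u v}

/-- The matrix `D_X(G)`: variable `x_v` at the `(v,v)` entry, and the constant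
`dist(u,v)` at the `(u,v)` entry for `u ≠ v`. -/
noncomputable def distDX {V : Type*} [DecidableEq V] (A : V → V → Prop) :
    Matrix V V (MvPolynomial V ℤ) :=
  Matrix.of fun u v => if u = v then X u else C (ddist A u v : ℤ)

lemma walk_one {V : Type*} {A : V → V → Prop} {a b : V} (h : A a b) : IsWalk A 1 a b := by
  refine ⟨![a, b], rfl, rfl, ?_⟩
  intro i
  have : i = 0 := Subsingleton.elim _ _
  subst this
  simpa using h

lemma ddist_eq_one {V : Type*} {A : V → V → Prop} {a b : V} (h : A a b) (hne : a ≠ b) :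
    ddist A a b = 1 := by
  have h1 : (1 : ℕ) ∈ {k | IsWalk A k a b} := walk_one h
  have hle : ddist A a b ≤ 1 := Nat.sInf_le h1
  have hne0 : ddist A a b ≠ 0 := by
    intro h0
    have := Nat.sInf_mem (⟨1, h1⟩ : Set.Nonempty {k | IsWalk A k a b})
    rw [show sInf {k | IsWalk A k a b} = ddist A a b from rfl, h0] at this
    obtain ⟨f, hf0, hfl, -⟩ := this
    exact hne (hf0 ▸ hfl ▸ rfl)
  omega

lemma ddist_eq_two {V : Type*} {A : V → V → Prop} {a b : V}
    (hne : a ≠ b) (hnA : ¬ A a b) (hd : ddist A a b ≤ 2)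
    (hs : ∃ k, IsWalk A k a b) : ddist A a b = 2 := by
  have h2 : 2 ≤ ddist A a b := by
    refine le_csInf hs ?_
    intro k hk
    by_contra hlt
    interval_cases k
    · obtain ⟨f, hf0, hfl, -⟩ := hk
      exact hne (hf0 ▸ hfl ▸ rfl)
    · obtain ⟨f, hf0, hfl, ha⟩ := hk
      have := ha 0
      rw [show (0 : Fin 1).castSucc = 0 from rfl, show (0 : Fin 1).succ = Fin.last 1 from rfl,
        hf0, hfl] at this
      exact hnA this
  omega


/-- Pattern F₃: a strong digraph of diameter at most 2 containing the pattern `F₃`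
has trivial second distance ideal. -/
theorem second_ideal_trivial_of_pattern_F3 {V : Type*} [Fintype V] [DecidableEq V]
    (A : V → V → Prop) (hirr : Irreflexive A)
    (hstrong : ∀ u v : V, ∃ k, IsWalk A k u v)
    (hdiam : ∀ u v : V, ddist A u v ≤ 2)
    (u v w z : V)
    (huv : u ≠ v) (huw : u ≠ w) (huz : u ≠ z) (hvw : v ≠ w) (hvz : v ≠ z) (hwz : w ≠ z)
    (h1 : A u v) (h2 : A u z) (h3 : A w v)
    (h4 : ¬ A w z) :
    minorsIdeal (distDX A) 2 = ⊤ := by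
  rw [Ideal.eq_top_iff_one]
  have d1 : ddist A u v = 1 := ddist_eq_one h1 huv
  have d2 : ddist A u z = 1 := ddist_eq_one h2 huz
  have d3 : ddist A w v = 1 := ddist_eq_one h3 hvw.symm
  have d4 : ddist A w z = 2 := ddist_eq_two hwz h4 (hdiam w z) (hstrong w z)
  have hdet : ((distDX A).submatrix ![u, w] ![v, z]).det = 1 := by
    rw [Matrix.det_fin_two]
    simp only [Matrix.submatrix_apply]
    show distDX A u v * distDX A w z - distDX A u z * distDX A w v = 1
    simp only [distDX, Matrix.of_apply, if_neg huv, if_neg huz, if_neg hwz,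
      if_neg hvw.symm, d1, d2, d3, d4]
    push_cast
    rw [← C_mul, ← C_mul, ← C_sub]
    norm_num
  have hr : Function.Injective ![u, w] := by
    intro i j hij
    fin_cases i <;> fin_cases j <;> simp_all
  have hc : Function.Injective ![v, z] := by
    intro i j hij
    fin_cases i <;> fin_cases j <;> simp_all
  exact hdet ▸ Ideal.subset_span ⟨![u, w], ![v, z], hr, hc, rfl⟩
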